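/- Let s₁ < s₂ < s₃ be positive integers with s₃ = s₁ + s₂, let j be the unique integer with 0 ≤ j < 2s₁ and s₂ − s₁ ≡ j (mod 2s₁), and suppose 0 ≤ j < s₁. Then the eventual period p of the nim sequence of the subtraction game S(s₁, s₂, s₃) equals s₂ + s₃ − j. -/
import Mathlib


/-- The Grundy (nim-value) function of the subtraction game with subtraction
set `S` (a finite set of positive integers):
`G(h) = mex { G(h - s) : s ∈ S, s ≤ h }`, where `mex` is realized as `sInf`
of the complement.  (The positivity condition in the filter is vacuous for
sets of positive integers and serves to make the recursion well-founded.) -/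
noncomputable def grundy (S : Finset ℕ) : ℕ → ℕ
  | h => sInf {n : ℕ | n ∉ ((S.filter (fun s => 0 < s ∧ s ≤ h)).attach.image
      (fun s => grundy S (h - s.1)))}
  decreasing_by
    have := Finset.mem_filter.mp s.2
    omega

/-- `p` is the eventual period of the nim sequence of the subtraction game
with subtraction set `S`: the least positive `p` such that for some `N`,
`G(h + p) = G(h)` for all `h ≥ N`. -/
def IsEventualPeriod (S : Finset ℕ) (p : ℕ) : Prop :=
  IsLeast {q : ℕ | 0 < q ∧ ∃ N : ℕ, ∀ h ≥ N, grundy S (h + q) = grundy S h} p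


lemma grundy3 (a b c h : ℕ) :
    grundy {a,b,c} h = sInf {n | ¬((0 < a ∧ a ≤ h ∧ grundy {a,b,c} (h-a) = n)
      ∨ (0 < b ∧ b ≤ h ∧ grundy {a,b,c} (h-b) = n)
      ∨ (0 < c ∧ c ≤ h ∧ grundy {a,b,c} (h-c) = n))} := by
  rw [grundy]
  congr 1
  ext n
  simp only [Set.mem_setOf_eq, Finset.mem_image, Finset.mem_attach, true_and,
    Subtype.exists, Finset.mem_filter, Finset.mem_insert, Finset.mem_singleton]
  constructor
  · intro hn hc
    apply hn
    rcases hc with ⟨h1,h2,h3⟩|⟨h1,h2,h3⟩|⟨h1,h2,h3⟩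
    · exact ⟨a, ⟨Or.inl rfl, h1, h2⟩, h3⟩
    · exact ⟨b, ⟨Or.inr (Or.inl rfl), h1, h2⟩, h3⟩
    · exact ⟨c, ⟨Or.inr (Or.inr rfl), h1, h2⟩, h3⟩
  · rintro hn ⟨s, ⟨hs, h1, h2⟩, h3⟩
    apply hn
    rcases hs with rfl|rfl|rfl
    · exact Or.inl ⟨h1, h2, h3⟩
    · exact Or.inr (Or.inl ⟨h1, h2, h3⟩)
    · exact Or.inr (Or.inr ⟨h1, h2, h3⟩)

lemma sInf_not_eq {Pp : ℕ → Prop} (v : ℕ) (h1 : ¬ Pp v) (h2 : ∀ n, n < v → Pp n) :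
    sInf {n | ¬ Pp n} = v := by
  have hv : v ∈ {n | ¬ Pp n} := h1
  refine le_antisymm (Nat.sInf_le hv) ?_
  by_contra hlt
  push_neg at hlt
  exact (Nat.sInf_mem (⟨v, hv⟩ : Set.Nonempty {n | ¬ Pp n})) (h2 _ hlt)

lemma grundy3_step (a b c h v : ℕ)
    (h1 : ¬((0 < a ∧ a ≤ h ∧ grundy {a,b,c} (h-a) = v)
      ∨ (0 < b ∧ b ≤ h ∧ grundy {a,b,c} (h-b) = v)
      ∨ (0 < c ∧ c ≤ h ∧ grundy {a,b,c} (h-c) = v)))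
    (h2 : ∀ n, n < v → ((0 < a ∧ a ≤ h ∧ grundy {a,b,c} (h-a) = n)
      ∨ (0 < b ∧ b ≤ h ∧ grundy {a,b,c} (h-b) = n)
      ∨ (0 < c ∧ c ≤ h ∧ grundy {a,b,c} (h-c) = n))) :
    grundy {a,b,c} h = v := by
  rw [grundy3]; exact sInf_not_eq v h1 h2

def gfun (a L m : ℕ) : ℕ := (if m < L then 0 else 2) + (m / a) % 2

lemma gfun_eval (a L x Q R : ℕ) (ha : 0 < a) (hR : R < a) (hx : x = a*Q+R) :
    gfun a L x = (if x < L then 0 else 2) + Q % 2 := by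
  unfold gfun
  congr 1
  subst hx
  rw [Nat.mul_add_div ha, Nat.div_eq_of_lt hR, add_zero]

lemma gfun_ge2 (a L x : ℕ) (h : L ≤ x) : 2 ≤ gfun a L x ∧ gfun a L x ≤ 3 := by
  unfold gfun
  rw [if_neg (by omega)]
  have := Nat.mod_lt (x/a) (y := 2) (by omega)
  omega

lemma mod_sub (P s h : ℕ) (hP : 0 < P) (hsh : s ≤ h) (hsP : s < P) :
    (h - s) % P = if s ≤ h % P then h % P - s else h % P + P - s := by
  have h1 := Nat.div_add_mod h P
  have h2 : h % P < P := Nat.mod_lt _ hP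
  split_ifs with hc
  · have e : h - s = P*(h/P) + (h%P - s) := by omega
    rw [e, Nat.mul_add_mod, Nat.mod_eq_of_lt (by omega)]
  · have hq : 1 ≤ h / P := by
      rcases Nat.eq_zero_or_pos (h / P) with h0 | h0
      · rw [h0, Nat.mul_zero] at h1; omega
      · exact h0
    have e2 : P*(h/P - 1) + P = P*(h/P) := by
      rw [← Nat.mul_succ]
      congr 1
      omega
    have e : h - s = P*(h/P - 1) + (h%P + P - s) := by omega
    rw [e, Nat.mul_add_mod, Nat.mod_eq_of_lt (by omega)]

lemma gfun_eval_lt (a L x Q R : ℕ) (ha : 0 < a) (hR : R < a) (hx : x = a*Q+R)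
    (hxL : x < L) : gfun a L x = Q % 2 := by
  rw [gfun_eval a L x Q R ha hR hx, if_pos hxL, zero_add]

lemma gfun_eval_ge (a L x Q R : ℕ) (ha : 0 < a) (hR : R < a) (hx : x = a*Q+R)
    (hxL : L ≤ x) : gfun a L x = 2 + Q % 2 := by
  rw [gfun_eval a L x Q R ha hR hx, if_neg (by omega)]

theorem grundy_formula (a j k : ℕ) (ha : 0 < a) (hja : j < a) (hjk : 0 < j + k) :
    ∀ h : ℕ, grundy {a, a*(2*k+1)+j, a*(2*k+2)+j} h
      = gfun a (a*(2*k+2)) (h % (a*(4*k+3)+j)) := by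
  intro h
  induction h using Nat.strong_induction_on with
  | _ h IH =>
  set b := a*(2*k+1)+j with hbdef
  set c := a*(2*k+2)+j with hcdef
  set L := a*(2*k+2) with hLdef
  set P := a*(4*k+3)+j with hPdef
  have rb : b = 2*(a*k) + a + j := by rw [hbdef]; ring
  have rc : c = 2*(a*k) + 2*a + j := by rw [hcdef, hLdef]; ring
  have rL : L = 2*(a*k) + 2*a := by rw [hLdef]; ring
  have rP : P = 4*(a*k) + 3*a + j := by rw [hPdef]; ring
  have rk : k ≤ a*k := Nat.le_mul_of_pos_left k ha
  have mle : ∀ x y : ℕ, x ≤ y → a*x ≤ a*y := fun x y hxy => Nat.mul_le_mul_left a hxy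
  have hP : 0 < P := by omega
  set m := h % P with hmdef
  have hm : m < P := Nat.mod_lt _ hP
  obtain ⟨q, r, hr, hqr⟩ : ∃ q r, r < a ∧ m = a*q + r :=
    ⟨m/a, m%a, Nat.mod_lt _ ha, (Nat.div_add_mod m a).symm⟩
  -- small-h cases first
  by_cases hS1 : h < a
  · -- S1 : no moves, value 0
    have hmh : m = h := by rw [hmdef]; exact Nat.mod_eq_of_lt (by omega)
    have hv : gfun a L m = 0 := by
      rw [gfun_eval_lt a L m 0 m ha (by omega) (by omega) (by omega)]
    rw [hv]
    apply grundy3_step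
    · rintro (⟨_,h2,_⟩|⟨_,h2,_⟩|⟨_,h2,_⟩) <;> omega
    · intro n hn; exact absurd hn (Nat.not_lt_zero n)
  push_neg at hS1
  by_cases hS2 : h < b
  · -- S2 : only move a
    have hmh : m = h := by rw [hmdef]; exact Nat.mod_eq_of_lt (by omega)
    have hq1 : 1 ≤ q := by
      rcases Nat.eq_zero_or_pos q with rfl|h0
      · omega
      · exact h0
    obtain ⟨q', rfl⟩ : ∃ q', q = q' + 1 := ⟨q-1, by omega⟩
    have f1 : a*(q'+1) = a*q' + a := by ring
    have f2 : a*(2*k) = 2*(a*k) := by ring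
    have hq2k : q' + 1 ≤ 2*k + 1 := by
      by_contra hc
      have := mle (2*k+2) (q'+1) (by omega)
      omega
    have va : grundy {a,b,c} (h-a) = q' % 2 := by
      rw [IH (h-a) (by omega)]
      have hxm : (h-a) % P = m - a := by rw [hmh]; rw [Nat.mod_eq_of_lt (by omega)]
      rw [hxm]
      apply gfun_eval_lt a L _ q' r ha hr (by omega)
      have := mle q' (2*k) (by omega)
      omega
    have hv : gfun a L m = (q'+1) % 2 := by
      apply gfun_eval_lt a L m (q'+1) r ha hr hqr
      have := mle (q'+1) (2*k+1) (by omega)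
      have f3 : a*(2*k+1) = 2*(a*k)+a := by ring
      omega
    rw [hv]
    rcases Nat.mod_two_eq_zero_or_one q' with hp|hp
    · have : (q'+1) % 2 = 1 := by omega
      rw [this]
      apply grundy3_step
      · rintro (⟨_,h2,h3⟩|⟨_,h2,h3⟩|⟨_,h2,h3⟩) <;> omega
      · intro n hn
        exact Or.inl ⟨ha, by omega, by omega⟩
    · have : (q'+1) % 2 = 0 := by omega
      rw [this]
      apply grundy3_step
      · rintro (⟨_,h2,h3⟩|⟨_,h2,h3⟩|⟨_,h2,h3⟩) <;> omega
      · intro n hn; exact absurd hn (Nat.not_lt_zero n)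
  push_neg at hS2
  by_cases hS3 : h < c
  · -- S3 : moves a and b
    have hmh : m = h := by rw [hmdef]; exact Nat.mod_eq_of_lt (by omega)
    have f2 : a*(2*k) = 2*(a*k) := by ring
    have f3 : a*(2*k+1) = 2*(a*k)+a := by ring
    have f4 : a*(2*k+2) = 2*(a*k)+2*a := by ring
    by_cases hL : h < L
    · -- q = 2k+1, r ≥ j, value 1
      have hq : q = 2*k+1 := by
        by_cases h1 : q ≤ 2*k
        · have := mle q (2*k) h1; omega
        · by_cases h2 : 2*k+2 ≤ q
          · have := mle (2*k+2) q h2; omega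
          · omega
      subst hq
      have hrj : j ≤ r := by omega
      have va : grundy {a,b,c} (h-a) = 0 := by
        rw [IH (h-a) (by omega), Nat.mod_eq_of_lt (by omega)]
        have : gfun a L (h-a) = (2*k) % 2 :=
          gfun_eval_lt a L _ (2*k) r ha hr (by omega) (by omega)
        omega
      have vb : grundy {a,b,c} (h-b) = 0 := by
        rw [IH (h-b) (by omega), Nat.mod_eq_of_lt (by omega)]
        have : gfun a L (h-b) = 0 % 2 :=
          gfun_eval_lt a L _ 0 (r-j) ha (by omega) (by omega) (by omega)
        omega
      have hv : gfun a L m = 1 := by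
        have : gfun a L m = (2*k+1) % 2 := gfun_eval_lt a L m (2*k+1) r ha hr hqr (by omega)
        omega
      rw [hv]
      apply grundy3_step
      · rintro (⟨_,h2,h3⟩|⟨_,h2,h3⟩|⟨_,h2,h3⟩) <;> omega
      · intro n hn
        exact Or.inl ⟨ha, by omega, by omega⟩
    · -- L ≤ h < c : q = 2k+2, r < j, value 2
      have hq : q = 2*k+2 := by
        by_cases h1 : q ≤ 2*k+1
        · have := mle q (2*k+1) h1; omega
        · by_cases h2 : 2*k+3 ≤ q
          · have h5 := mle (2*k+3) q h2
            have f5 : a*(2*k+3) = 2*(a*k)+3*a := by ring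
            omega
          · omega
      subst hq
      have hrj : r < j := by omega
      have va : grundy {a,b,c} (h-a) = 1 := by
        rw [IH (h-a) (by omega), Nat.mod_eq_of_lt (by omega)]
        have : gfun a L (h-a) = (2*k+1) % 2 :=
          gfun_eval_lt a L _ (2*k+1) r ha hr (by omega) (by omega)
        omega
      have vb : grundy {a,b,c} (h-b) = 0 := by
        rw [IH (h-b) (by omega), Nat.mod_eq_of_lt (by omega)]
        have : gfun a L (h-b) = 0 % 2 :=
          gfun_eval_lt a L _ 0 (a+r-j) ha (by omega) (by omega) (by omega)
        omega
      have hv : gfun a L m = 2 := by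
        have : gfun a L m = 2 + (2*k+2) % 2 := gfun_eval_ge a L m (2*k+2) r ha hr hqr (by omega)
        omega
      rw [hv]
      apply grundy3_step
      · rintro (⟨_,h2,h3⟩|⟨_,h2,h3⟩|⟨_,h2,h3⟩) <;> omega
      · intro n hn
        have : n = 0 ∨ n = 1 := by omega
        rcases this with rfl|rfl
        · exact Or.inr (Or.inl ⟨by omega, by omega, by omega⟩)
        · exact Or.inl ⟨ha, by omega, by omega⟩
  push_neg at hS3
  -- main branch : c ≤ h, all three moves available
  have f2 : a*(2*k) = 2*(a*k) := by ring
  have f3 : a*(2*k+1) = 2*(a*k)+a := by ring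
  have f4 : a*(2*k+2) = 2*(a*k)+2*a := by ring
  have f5 : a*(4*k+3) = 4*(a*k)+3*a := by ring
  have Va : grundy {a,b,c} (h-a) = gfun a L ((h-a)%P) := IH _ (by omega)
  have Vb : grundy {a,b,c} (h-b) = gfun a L ((h-b)%P) := IH _ (by omega)
  have Vc : grundy {a,b,c} (h-c) = gfun a L ((h-c)%P) := IH _ (by omega)
  have Ma : (h-a) % P = if a ≤ m then m - a else m + P - a :=
    mod_sub P a h hP (by omega) (by omega)
  have Mb : (h-b) % P = if b ≤ m then m - b else m + P - b :=
    mod_sub P b h hP (by omega) (by omega)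
  have Mc : (h-c) % P = if c ≤ m then m - c else m + P - c :=
    mod_sub P c h hP (by omega) (by omega)
  by_cases hq0 : q = 0
  · -- A1 : m = r < a, value 0
    subst hq0
    have va : grundy {a,b,c} (h-a) = gfun a L (m+P-a) := by
      rw [Va, Ma, if_neg (by omega)]
    have va2 := gfun_ge2 a L (m+P-a) (by omega)
    have vb : grundy {a,b,c} (h-b) = 2 := by
      rw [Vb, Mb, if_neg (by omega)]
      have := gfun_eval_ge a L (m+P-b) (2*k+2) r ha hr (by omega) (by omega)
      omega
    have vc : grundy {a,b,c} (h-c) = 1 := by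
      rw [Vc, Mc, if_neg (by omega)]
      have := gfun_eval_lt a L (m+P-c) (2*k+1) r ha hr (by omega) (by omega)
      omega
    have hv : gfun a L m = 0 := by
      have := gfun_eval_lt a L m 0 r ha hr hqr (by omega)
      omega
    rw [hv]
    apply grundy3_step
    · rintro (⟨_,h2,h3⟩|⟨_,h2,h3⟩|⟨_,h2,h3⟩) <;> omega
    · intro n hn; exact absurd hn (Nat.not_lt_zero n)
  push_neg at hq0
  by_cases hqA : q ≤ 2*k+1
  · by_cases hA3 : q = 2*k+1 ∧ j ≤ r
    · -- A3 : value 1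
      obtain ⟨hq, hrj⟩ := hA3
      subst hq
      have va : grundy {a,b,c} (h-a) = 0 := by
        rw [Va, Ma, if_pos (by omega)]
        have := gfun_eval_lt a L (m-a) (2*k) r ha hr (by omega) (by omega)
        omega
      have vb : grundy {a,b,c} (h-b) = 0 := by
        rw [Vb, Mb, if_pos (by omega)]
        have := gfun_eval_lt a L (m-b) 0 (r-j) ha (by omega) (by omega) (by omega)
        omega
      have vc : grundy {a,b,c} (h-c) = gfun a L (m+P-c) := by
        rw [Vc, Mc, if_neg (by omega)]
      have vc2 := gfun_ge2 a L (m+P-c) (by omega)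
      have hv : gfun a L m = 1 := by
        have := gfun_eval_lt a L m (2*k+1) r ha hr hqr (by omega)
        omega
      rw [hv]
      apply grundy3_step
      · rintro (⟨_,h2,h3⟩|⟨_,h2,h3⟩|⟨_,h2,h3⟩) <;> omega
      · intro n hn
        exact Or.inl ⟨ha, by omega, by omega⟩
    · -- A2 : 1 ≤ q ≤ 2k+1, m < b
      push_neg at hA3
      have hmb : m < b := by
        by_cases h1 : q ≤ 2*k
        · have := mle q (2*k) h1; omega
        · have hq21 : q = 2*k+1 := by omega
          have := hA3 hq21
          rw [hq21] at hqr
          omega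
      obtain ⟨q', rfl⟩ : ∃ q', q = q' + 1 := ⟨q-1, by omega⟩
      have f1 : a*(q'+1) = a*q' + a := by ring
      have hq2k : q' ≤ 2*k := by omega
      have hmla := mle q' (2*k) hq2k
      have va : grundy {a,b,c} (h-a) = q' % 2 := by
        rw [Va, Ma, if_pos (by omega)]
        exact gfun_eval_lt a L (m-a) q' r ha hr (by omega) (by omega)
      have vb : grundy {a,b,c} (h-b) = gfun a L (m+P-b) := by
        rw [Vb, Mb, if_neg (by omega)]
      have vb2 := gfun_ge2 a L (m+P-b) (by omega)
      have vc : grundy {a,b,c} (h-c) = gfun a L (m+P-c) := by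
        rw [Vc, Mc, if_neg (by omega)]
      have vc2 := gfun_ge2 a L (m+P-c) (by omega)
      have hv : gfun a L m = (q'+1) % 2 := by
        apply gfun_eval_lt a L m (q'+1) r ha hr hqr
        omega
      rw [hv]
      rcases Nat.mod_two_eq_zero_or_one q' with hp|hp
      · have he : (q'+1) % 2 = 1 := by omega
        rw [he]
        apply grundy3_step
        · rintro (⟨_,h2,h3⟩|⟨_,h2,h3⟩|⟨_,h2,h3⟩) <;> omega
        · intro n hn
          exact Or.inl ⟨ha, by omega, by omega⟩
      · have he : (q'+1) % 2 = 0 := by omega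
        rw [he]
        apply grundy3_step
        · rintro (⟨_,h2,h3⟩|⟨_,h2,h3⟩|⟨_,h2,h3⟩) <;> omega
        · intro n hn; exact absurd hn (Nat.not_lt_zero n)
  push_neg at hqA
  by_cases hqB : q = 2*k+2
  · subst hqB
    have va : grundy {a,b,c} (h-a) = 1 := by
      rw [Va, Ma, if_pos (by omega)]
      have := gfun_eval_lt a L (m-a) (2*k+1) r ha hr (by omega) (by omega)
      omega
    have hv : gfun a L m = 2 := by
      have := gfun_eval_ge a L m (2*k+2) r ha hr hqr (by omega)
      omega
    rw [hv]
    by_cases hrj : r < j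
    · -- B1 : vb = 0 (m-b = a+r-j), vc = 3 (wrap)
      have vb : grundy {a,b,c} (h-b) = 0 := by
        rw [Vb, Mb, if_pos (by omega)]
        have := gfun_eval_lt a L (m-b) 0 (a+r-j) ha (by omega) (by omega) (by omega)
        omega
      have vc : grundy {a,b,c} (h-c) = 3 := by
        rw [Vc, Mc, if_neg (by omega)]
        have := gfun_eval_ge a L (m+P-c) (4*k+3) r ha hr (by omega) (by omega)
        omega
      apply grundy3_step
      · rintro (⟨_,h2,h3⟩|⟨_,h2,h3⟩|⟨_,h2,h3⟩) <;> omega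
      · intro n hn
        have : n = 0 ∨ n = 1 := by omega
        rcases this with rfl|rfl
        · exact Or.inr (Or.inl ⟨by omega, by omega, by omega⟩)
        · exact Or.inl ⟨ha, by omega, by omega⟩
    · -- B2 : vb = 1 (m-b = a+r-j with Q=1), vc = 0
      have vb : grundy {a,b,c} (h-b) = 1 := by
        rw [Vb, Mb, if_pos (by omega)]
        have h6 : a*1 = a := by ring
        have := gfun_eval_lt a L (m-b) 1 (r-j) ha (by omega) (by omega) (by omega)
        omega
      have vc : grundy {a,b,c} (h-c) = 0 := by
        rw [Vc, Mc, if_pos (by omega)]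
        have := gfun_eval_lt a L (m-c) 0 (r-j) ha (by omega) (by omega) (by omega)
        omega
      apply grundy3_step
      · rintro (⟨_,h2,h3⟩|⟨_,h2,h3⟩|⟨_,h2,h3⟩) <;> omega
      · intro n hn
        have : n = 0 ∨ n = 1 := by omega
        rcases this with rfl|rfl
        · exact Or.inr (Or.inr ⟨by omega, by omega, by omega⟩)
        · exact Or.inl ⟨ha, by omega, by omega⟩
  · -- B3 : q ≥ 2k+3
    obtain ⟨q'', rfl⟩ : ∃ t, q = t + (2*k+3) := ⟨q-(2*k+3), by omega⟩
    have f6 : a*(q''+(2*k+3)) = a*q'' + 2*(a*k) + 3*a := by ring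
    have f7 : a*(q''+(2*k+2)) = a*q'' + 2*(a*k) + 2*a := by ring
    have f8 : a*(q''+2) = a*q'' + 2*a := by ring
    have f9 : a*(q''+1) = a*q'' + a := by ring
    have va : grundy {a,b,c} (h-a) = 2 + (q''+(2*k+2)) % 2 := by
      rw [Va, Ma, if_pos (by omega)]
      exact gfun_eval_ge a L (m-a) (q''+(2*k+2)) r ha hr (by omega) (by omega)
    have hbc : grundy {a,b,c} (h-b) + grundy {a,b,c} (h-c) = 1
        ∧ grundy {a,b,c} (h-b) ≤ 1 ∧ grundy {a,b,c} (h-c) ≤ 1 := by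
      by_cases hrj : j ≤ r
      · have vb : grundy {a,b,c} (h-b) = (q''+2) % 2 := by
          rw [Vb, Mb, if_pos (by omega)]
          exact gfun_eval_lt a L (m-b) (q''+2) (r-j) ha (by omega) (by omega) (by omega)
        have vc : grundy {a,b,c} (h-c) = (q''+1) % 2 := by
          rw [Vc, Mc, if_pos (by omega)]
          exact gfun_eval_lt a L (m-c) (q''+1) (r-j) ha (by omega) (by omega) (by omega)
        omega
      · have vb : grundy {a,b,c} (h-b) = (q''+1) % 2 := by
          rw [Vb, Mb, if_pos (by omega)]
          exact gfun_eval_lt a L (m-b) (q''+1) (a+r-j) ha (by omega) (by omega) (by omega)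
        have vc : grundy {a,b,c} (h-c) = q'' % 2 := by
          rw [Vc, Mc, if_pos (by omega)]
          exact gfun_eval_lt a L (m-c) q'' (a+r-j) ha (by omega) (by omega) (by omega)
        omega
    obtain ⟨hsum, hb1, hc1⟩ := hbc
    have hv : gfun a L m = 2 + (q''+(2*k+3)) % 2 := by
      exact gfun_eval_ge a L m (q''+(2*k+3)) r ha hr hqr (by omega)
    rw [hv]
    rcases Nat.mod_two_eq_zero_or_one q'' with hp|hp
    · have he : 2 + (q''+(2*k+3)) % 2 = 3 := by omega
      rw [he]
      apply grundy3_step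
      · rintro (⟨_,h2,h3⟩|⟨_,h2,h3⟩|⟨_,h2,h3⟩) <;> omega
      · intro n hn
        have : n = 0 ∨ n = 1 ∨ n = 2 := by omega
        rcases this with rfl|rfl|rfl
        · by_cases hb0 : grundy {a,b,c} (h-b) = 0
          · exact Or.inr (Or.inl ⟨by omega, by omega, by omega⟩)
          · exact Or.inr (Or.inr ⟨by omega, by omega, by omega⟩)
        · by_cases hb0 : grundy {a,b,c} (h-b) = 1
          · exact Or.inr (Or.inl ⟨by omega, by omega, by omega⟩)
          · exact Or.inr (Or.inr ⟨by omega, by omega, by omega⟩)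
        · exact Or.inl ⟨ha, by omega, by omega⟩
    · have he : 2 + (q''+(2*k+3)) % 2 = 2 := by omega
      rw [he]
      apply grundy3_step
      · rintro (⟨_,h2,h3⟩|⟨_,h2,h3⟩|⟨_,h2,h3⟩) <;> omega
      · intro n hn
        have : n = 0 ∨ n = 1 := by omega
        rcases this with rfl|rfl
        · by_cases hb0 : grundy {a,b,c} (h-b) = 0
          · exact Or.inr (Or.inl ⟨by omega, by omega, by omega⟩)
          · exact Or.inr (Or.inr ⟨by omega, by omega, by omega⟩)
        · by_cases hb0 : grundy {a,b,c} (h-b) = 1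
          · exact Or.inr (Or.inl ⟨by omega, by omega, by omega⟩)
          · exact Or.inr (Or.inr ⟨by omega, by omega, by omega⟩)

lemma gfun_lt2 (a L x : ℕ) (h : x < L) : gfun a L x ≤ 1 := by
  unfold gfun
  rw [if_pos h]
  have := Nat.mod_lt (x/a) (y := 2) (by omega)
  omega

/-- Case I of the conjecture, subcase `0 ≤ j < s₁`: if `s₃ = s₁ + s₂` and
`j ≡ s₂ - s₁ (mod 2s₁)` with `0 ≤ j < s₁`, then the eventual period equals
`s₂ + s₃ - j`. -/
theorem subtraction_game_period_caseI_small_j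
    (s1 s2 s3 j p : ℕ) (h1 : 0 < s1) (h12 : s1 < s2) (h23 : s2 < s3)
    (hsum : s3 = s1 + s2)
    (hj : (s2 - s1) % (2 * s1) = j) (hjlt : j < s1)
    (hp : IsEventualPeriod {s1, s2, s3} p) :
    p = s2 + s3 - j := by
  have hdm := Nat.div_add_mod (s2 - s1) (2*s1)
  set k := (s2 - s1) / (2*s1) with hkdef
  rw [hj] at hdm
  have e1 : s1*(2*k+1) = 2*s1*k + s1 := by ring
  have e2 : s1*(2*k+2) = 2*s1*k + 2*s1 := by ring
  have e3 : s1*(4*k+3) = 4*(s1*k) + 3*s1 := by ring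
  have e4 : 2*s1*k = 2*(s1*k) := by ring
  have hs2 : s2 = s1*(2*k+1)+j := by omega
  have hs3 : s3 = s1*(2*k+2)+j := by omega
  have hjk : 0 < j + k := by
    rcases Nat.eq_zero_or_pos (j+k) with h0|h0
    · exfalso
      have hj0 : j = 0 := by
        rcases Nat.add_eq_zero.mp h0 with ⟨hh1, hh2⟩
        exact hh1
      have hk0 : k = 0 := by
        rcases Nat.add_eq_zero.mp h0 with ⟨hh1, hh2⟩
        exact hh2
      rw [hj0, hk0] at hs2
      norm_num at hs2
      omega
    · exact h0
  have hset : ({s1,s2,s3} : Finset ℕ) = {s1, s1*(2*k+1)+j, s1*(2*k+2)+j} := by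
    rw [hs2, hs3]
  rw [hset] at hp
  set L := s1*(2*k+2) with hLdef
  set P := s1*(4*k+3)+j with hPdef
  have hF := grundy_formula s1 j k h1 hjlt hjk
  have hP0 : 0 < P := by omega
  have hLP : L < P := by omega
  have hL0 : 0 < L := by omega
  have ours : IsEventualPeriod {s1, s1*(2*k+1)+j, s1*(2*k+2)+j} P := by
    constructor
    · refine ⟨hP0, 0, fun h _ => ?_⟩
      rw [hF, hF, Nat.add_mod_right]
    · rintro q ⟨hq0, N, hinv⟩
      by_contra hlt
      push_neg at hlt
      have key : ∀ m : ℕ, gfun s1 L ((m+q) % P) = gfun s1 L (m % P) := by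
        intro m
        have hge : m + P*N ≥ N := by
          have := Nat.le_mul_of_pos_left N hP0
          omega
        have hk2 := hinv (m + P*N) hge
        rw [hF, hF] at hk2
        have ec : m + P*N + q = m + q + P*N := by ring
        rw [ec, Nat.add_mul_mod_self_left, Nat.add_mul_mod_self_left] at hk2
        exact hk2
      set m1 := (L + P - q) % P with hm1def
      have hm1P : m1 < P := Nat.mod_lt _ hP0
      have hm1q : (m1 + q) % P = L := by
        rw [hm1def, Nat.mod_add_mod]
        have e : L + P - q + q = L + P := by omega
        rw [e, Nat.add_mod_right, Nat.mod_eq_of_lt hLP]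
      have k1 := key m1
      rw [hm1q, Nat.mod_eq_of_lt hm1P] at k1
      have gL : gfun s1 L L = 2 := by
        have := gfun_eval_ge s1 L L (2*k+2) 0 h1 h1 (by omega) (le_refl L)
        omega
      have hm1L : L ≤ m1 := by
        by_contra hc
        have := gfun_lt2 s1 L m1 (by omega)
        omega
      have hdiv := Nat.div_add_mod (m1+q) P
      rw [hm1q] at hdiv
      have hm2q : (m1 - 1 + q) % P = L - 1 := by
        have e : m1 - 1 + q = P*((m1+q)/P) + (L-1) := by omega
        rw [e, Nat.mul_add_mod, Nat.mod_eq_of_lt (by omega)]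
      have k2 := key (m1 - 1)
      rw [hm2q, Nat.mod_eq_of_lt (by omega)] at k2
      have gL1 : gfun s1 L (L-1) = 1 := by
        have := gfun_eval_lt s1 L (L-1) (2*k+1) (s1-1) h1 (by omega) (by omega) (by omega)
        omega
      have hm2L : m1 - 1 < L := by
        by_contra hc
        have := gfun_ge2 s1 L (m1-1) (by omega)
        omega
      have hm1L' : m1 = L := by omega
      rw [hm1L'] at hm1q
      by_cases hcc : L + q < P
      · rw [Nat.mod_eq_of_lt hcc] at hm1q
        omega
      · rw [Nat.mod_eq_sub_mod (by omega), Nat.mod_eq_of_lt (by omega)] at hm1q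
        omega
  have := hp.unique ours
  omega
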